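/- arXiv:2410.10536 — 10 statements merged into one kernel-verified Lean document; each statement's English description precedes it below -/
import Mathlib

section
/- Let L be an algebraic Nijenhuis operator on a Lie algebra g over a field K, and let v, w be eigenvectors of L with distinct eigenvalues λ ≠ μ. If L is diagonalizable with all eigenvalues pairwise distinct (regular semisimple), then [v,w] lies in the span of v and w. -/
/-! For eigenvectors `v, w` with eigenvalues `l ≠ m`, the Nijenhuis identity becomes
`(L - l)(L - m)⁅v, w⁆ = 0`, so `⁅v, w⁆` lies in the sum of the `l`- and `m`-eigenspaces. A
diagonalizable operator with simple spectrum has one-dimensional eigenspaces, spanned by `v` and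
`w` respectively. -/

open Module End

theorem LieAlgebra.nijenhuis_lie_mem_ker_sub_smul_one_mul {K g : Type*} [CommRing K] [LieRing g]
    [LieAlgebra K g] {L : End K g}
    (hN : ∀ x y : g, L ⁅L x, y⁆ + L ⁅x, L y⁆ - ⁅L x, L y⁆ - L (L ⁅x, y⁆) = 0)
    {v w : g} {l m : K} (hLv : L v = l • v) (hLw : L w = m • w) :
    ⁅v, w⁆ ∈ LinearMap.ker ((L - l • 1) * (L - m • 1)) := by
  have h := hN v w
  simp only [hLv, hLw, smul_lie, lie_smul, map_smul, smul_smul] at h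
  simp only [LinearMap.mem_ker, mul_apply, LinearMap.sub_apply, LinearMap.smul_apply, one_apply,
    map_sub, map_smul]
  rw [← neg_eq_zero, ← h]
  module

theorem Module.End.ker_sub_smul_one_mul_le_eigenspace_sup {K V : Type*} [Field K]
    [AddCommGroup V] [Module K V] (L : End K V) {l m : K} (hlm : l ≠ m) :
    LinearMap.ker ((L - l • 1) * (L - m • 1)) ≤ L.eigenspace l ⊔ L.eigenspace m := by
  intro x hx
  simp only [LinearMap.mem_ker, mul_apply, LinearMap.sub_apply, LinearMap.smul_apply, one_apply,
    map_sub, map_smul] at hx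
  refine Submodule.mem_sup.2 ⟨(l - m)⁻¹ • (L x - m • x), ?_, (l - m)⁻¹ • (l • x - L x), ?_, ?_⟩
  · rw [mem_eigenspace_iff, map_smul, map_sub, map_smul, smul_comm]
    congr 1
    linear_combination (norm := module) hx
  · rw [mem_eigenspace_iff, map_smul, map_sub, map_smul, smul_comm]
    congr 1
    linear_combination (norm := module) -hx
  · rw [← smul_add, sub_add_sub_cancel', ← sub_smul, inv_smul_smul₀ (sub_ne_zero.2 hlm)]

theorem Module.Basis.repr_apply_of_apply_basis_eq_smul {K V ι : Type*} [CommRing K]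
    [AddCommGroup V] [Module K V] {L : End K V} (b : Basis ι K V) {ev : ι → K}
    (hdiag : ∀ i, L (b i) = ev i • b i) (x : V) (i : ι) :
    b.repr (L x) i = ev i * b.repr x i := by
  have : (Finsupp.lapply i ∘ₗ b.repr.toLinearMap) ∘ₗ L =
      ev i • (Finsupp.lapply i ∘ₗ b.repr.toLinearMap) := by
    refine b.ext fun j => ?_
    rcases eq_or_ne j i with rfl | hji
    · simp [hdiag]
    · simp [hdiag, hji]
  exact LinearMap.congr_fun this x

theorem Module.Basis.repr_eq_zero_of_mem_eigenspace {K V ι : Type*} [Field K]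
    [AddCommGroup V] [Module K V] {L : End K V} (b : Basis ι K V) {ev : ι → K}
    (hdiag : ∀ i, L (b i) = ev i • b i) {c : K} {x : V} (hx : x ∈ L.eigenspace c) {i : ι}
    (hi : ev i ≠ c) : b.repr x i = 0 := by
  have h := b.repr_apply_of_apply_basis_eq_smul hdiag x i
  rw [mem_eigenspace_iff.1 hx, map_smul, Finsupp.smul_apply, smul_eq_mul] at h
  exact (mul_eq_mul_right_iff.1 h).resolve_left (Ne.symm hi)

theorem Module.Basis.eigenspace_le_span_singleton {K V ι : Type*} [Field K]
    [AddCommGroup V] [Module K V] {L : End K V} (b : Basis ι K V) {ev : ι → K}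
    (hev : Function.Injective ev) (hdiag : ∀ i, L (b i) = ev i • b i) {c : K} {v : V}
    (hv : L.HasEigenvector c v) : L.eigenspace c ≤ K ∙ v := by
  obtain ⟨i₀, hvi₀⟩ := Finsupp.ne_iff.1 ((LinearEquiv.map_ne_zero_iff b.repr).2 hv.2)
  have hi₀ : ev i₀ = c := by
    by_contra h
    exact hvi₀ (b.repr_eq_zero_of_mem_eigenspace hdiag hv.1 h)
  intro x hx
  refine Submodule.mem_span_singleton.2 ⟨b.repr x i₀ / b.repr v i₀, b.repr.injective ?_⟩
  ext i
  rcases eq_or_ne i i₀ with rfl | hi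
  · simp [div_mul_cancel₀ _ hvi₀]
  · have hc : ev i ≠ c := hi₀ ▸ hev.ne hi
    simp [b.repr_eq_zero_of_mem_eigenspace hdiag hx hc,
      b.repr_eq_zero_of_mem_eigenspace hdiag hv.1 hc]

theorem nijenhuis_bracket_mem_span_general
    {K : Type*} [Field K] {g : Type*} [LieRing g] [LieAlgebra K g]
    {ι : Type*}
    (L : Module.End K g)
    (hN : ∀ x y : g, L ⁅L x, y⁆ + L ⁅x, L y⁆ - ⁅L x, L y⁆ - L (L ⁅x, y⁆) = 0)
    (b : Module.Basis ι K g) (ev : ι → K) (hev : Function.Injective ev)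
    (hdiag : ∀ i, L (b i) = ev i • b i)
    (v w : g) (l m : K) (hv : v ≠ 0) (hw : w ≠ 0)
    (hLv : L v = l • v) (hLw : L w = m • w) (hlm : l ≠ m) :
    ⁅v, w⁆ ∈ Submodule.span K ({v, w} : Set g) := by
  have hvl : L.HasEigenvector l v := ⟨mem_eigenspace_iff.2 hLv, hv⟩
  have hwm : L.HasEigenvector m w := ⟨mem_eigenspace_iff.2 hLw, hw⟩
  rw [Submodule.span_insert]
  exact sup_le_sup (b.eigenspace_le_span_singleton hev hdiag hvl)
    (b.eigenspace_le_span_singleton hev hdiag hwm)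
    (L.ker_sub_smul_one_mul_le_eigenspace_sup hlm
      (LieAlgebra.nijenhuis_lie_mem_ker_sub_smul_one_mul hN hLv hLw))

/-- If `L` is a regular semisimple algebraic Nijenhuis operator (it has an eigenbasis with
pairwise distinct eigenvalues) and `v, w` are eigenvectors with distinct eigenvalues,
then `[v,w]` lies in the span of `v` and `w`. -/
theorem nijenhuis_bracket_mem_span
    {K : Type*} [Field K] {g : Type*} [LieRing g] [LieAlgebra K g]
    {ι : Type*} [Fintype ι]
    (L : Module.End K g)
    (hN : ∀ x y : g, L ⁅L x, y⁆ + L ⁅x, L y⁆ - ⁅L x, L y⁆ - L (L ⁅x, y⁆) = 0)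
    (b : Module.Basis ι K g) (ev : ι → K) (hev : Function.Injective ev)
    (hdiag : ∀ i, L (b i) = ev i • b i)
    (v w : g) (l m : K) (hv : v ≠ 0) (hw : w ≠ 0)
    (hLv : L v = l • v) (hLw : L w = m • w) (hlm : l ≠ m) :
    ⁅v, w⁆ ∈ Submodule.span K ({v, w} : Set g) :=
  nijenhuis_bracket_mem_span_general L hN b ev hev hdiag v w l m hv hw hLv hLw hlm
end

section
/- Let g be a Lie algebra over a field K with a basis η₁,…,ηₙ such that for every pair i ≠ j there exist constants α, β ∈ K with [ηᵢ, ηⱼ] = α·ηᵢ + β·ηⱼ. Then for any pairwise distinct scalars λ₁,…,λₙ ∈ K, the linear operator L defined by L ηᵢ = λᵢ ηᵢ is an algebraic Nijenhuis operator, i.e. L[Lx,y] + L[x,Ly] - [Lx,Ly] - L²[x,y] = 0 for all x, y ∈ g. -/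
/-!
The Nijenhuis torsion of `L` is bilinear, so it suffices that it vanishes on pairs of basis
vectors. If `L x = a • x`, `L y = b • y` and `⁅x, y⁆ = α • x + β • y`, each summand of the torsion
at `(x, y)` is a combination of `α • x` and `β • y`, and the coefficients cancel:
`(a + b) a - a b - a² = 0` and likewise for `b`. The case `x = y` is covered by `⁅x, x⁆ = 0`.
-/

namespace LieAlgebra

variable {K g : Type*} [CommRing K] [LieRing g] [LieAlgebra K g]

def nijenhuisTorsion (L : Module.End K g) : g →ₗ[K] g →ₗ[K] g :=
  LinearMap.mk₂ K (fun x y => L ⁅L x, y⁆ + L ⁅x, L y⁆ - ⁅L x, L y⁆ - L (L ⁅x, y⁆))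
    (by intro x x' y; simp only [map_add, add_lie]; abel)
    (by intro c x y; simp only [map_smul, smul_lie, smul_add, smul_sub])
    (by intro x y y'; simp only [map_add, lie_add]; abel)
    (by intro c x y; simp only [map_smul, lie_smul, smul_add, smul_sub])

@[simp]
theorem nijenhuisTorsion_apply (L : Module.End K g) (x y : g) :
    nijenhuisTorsion L x y = L ⁅L x, y⁆ + L ⁅x, L y⁆ - ⁅L x, L y⁆ - L (L ⁅x, y⁆) :=
  rfl

theorem nijenhuisTorsion_eq_zero_of_eigenvectors {L : Module.End K g} {x y : g} {a b α β : K}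
    (hx : L x = a • x) (hy : L y = b • y) (hxy : ⁅x, y⁆ = α • x + β • y) :
    nijenhuisTorsion L x y = 0 := by
  simp only [nijenhuisTorsion_apply, hx, hy, smul_lie, lie_smul, hxy, map_add, map_smul,
    smul_add, smul_smul]
  module

theorem nijenhuisTorsion_eq_zero_of_basis {ι : Type*} (η : Module.Basis ι K g)
    (hη : ∀ i j, ∃ α β : K, ⁅η i, η j⁆ = α • η i + β • η j)
    {L : Module.End K g} (lam : ι → K) (hL : ∀ i, L (η i) = lam i • η i) :
    nijenhuisTorsion L = 0 :=
  LinearMap.ext_basis η η fun i j =>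
    let ⟨_, _, hij⟩ := hη i j
    nijenhuisTorsion_eq_zero_of_eigenvectors (hL i) (hL j) hij

end LieAlgebra

theorem diagonal_is_nijenhuis_general
    {K : Type*} [Field K] {g : Type*} [LieRing g] [LieAlgebra K g]
    {n : ℕ}
    (η : Module.Basis (Fin n) K g)
    (hbasis : ∀ i j : Fin n, i ≠ j →
      ∃ α β : K, ⁅η i, η j⁆ = α • η i + β • η j)
    (lam : Fin n → K)
    (L : Module.End K g) (hL : ∀ i, L (η i) = lam i • η i) :
    ∀ x y : g, L ⁅L x, y⁆ + L ⁅x, L y⁆ - ⁅L x, L y⁆ - L (L ⁅x, y⁆) = 0 := by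
  have hη : ∀ i j, ∃ α β : K, ⁅η i, η j⁆ = α • η i + β • η j := by
    intro i j
    rcases eq_or_ne i j with rfl | hij
    · exact ⟨0, 0, by simp⟩
    · exact hbasis i j hij
  intro x y
  rw [← LieAlgebra.nijenhuisTorsion_apply,
    LieAlgebra.nijenhuisTorsion_eq_zero_of_basis η hη lam hL]
  rfl

/-- If a Lie algebra has a basis `η` such that any two basis vectors span a two-dimensional
subalgebra, then any diagonal operator `L η i = λ i • η i` with pairwise distinct eigenvalues
is an algebraic Nijenhuis operator. -/
theorem diagonal_is_nijenhuis
    {K : Type*} [Field K] {g : Type*} [LieRing g] [LieAlgebra K g]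
    {n : ℕ}
    (η : Module.Basis (Fin n) K g)
    (hbasis : ∀ i j : Fin n, i ≠ j →
      ∃ α β : K, ⁅η i, η j⁆ = α • η i + β • η j)
    (lam : Fin n → K) (hlam : Function.Injective lam)
    (L : Module.End K g) (hL : ∀ i, L (η i) = lam i • η i) :
    ∀ x y : g, L ⁅L x, y⁆ + L ⁅x, L y⁆ - ⁅L x, L y⁆ - L (L ⁅x, y⁆) = 0 :=
  diagonal_is_nijenhuis_general η hbasis lam L hL
end

section
/- Let g be the 3-dimensional Lie algebra over ℝ with basis η₁,η₂,η₃ and brackets [η₁,η₂] = -η₃, [η₂,η₃] = η₁, [η₃,η₁] = η₂ (the algebra a_{3,4} ≅ sl(2,ℝ)). Then the vectors ζ₁ = -η₁+η₂+η₃, ζ₂ = η₁+η₂-η₃, ζ₃ = 2η₁ form a basis of g satisfying [ζ₁,ζ₂] = ζ₁ - ζ₂, [ζ₂,ζ₃] = ζ₃ - 2ζ₂, [ζ₃,ζ₁] = -2ζ₁ - ζ₃; in particular every pair ζᵢ, ζⱼ spans a two-dimensional subalgebra. -/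
/-!
The brackets of the `ζᵢ` follow from those of the `ηᵢ` by bilinearity, and the coordinate
matrix of `ζ` in the basis `η` has determinant `-4`, so `ζ` is a basis. Each of the three
brackets is a combination of its two arguments; antisymmetry of the bracket covers the
remaining pairs.
-/

open Submodule

section
variable {R L : Type*} [CommRing R] [LieRing L] [LieAlgebra R L]

theorem lie_mem_span_pair_comm {x y : L} :
    ⁅y, x⁆ ∈ span R {y, x} ↔ ⁅x, y⁆ ∈ span R {x, y} := by
  rw [← lie_skew, neg_mem_iff, Set.pair_comm]

theorem forall_lie_mem_span_pair_of_lt {ι : Type*} [LinearOrder ι] {v : ι → L}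
    (h : ∀ i j, i < j → ⁅v i, v j⁆ ∈ span R {v i, v j}) :
    ∀ i j, ⁅v i, v j⁆ ∈ span R {v i, v j} := by
  intro i j
  rcases lt_trichotomy i j with hij | rfl | hji
  · exact h i j hij
  · rw [lie_self]; exact zero_mem _
  · exact lie_mem_span_pair_comm.1 (h j i hji)

theorem forall_lie_mem_span_pair_fin_three {v : Fin 3 → L}
    (h01 : ⁅v 0, v 1⁆ ∈ span R {v 0, v 1}) (h12 : ⁅v 1, v 2⁆ ∈ span R {v 1, v 2})
    (h20 : ⁅v 2, v 0⁆ ∈ span R {v 2, v 0}) :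
    ∀ i j, ⁅v i, v j⁆ ∈ span R {v i, v j} := by
  refine forall_lie_mem_span_pair_of_lt fun i j hij => ?_
  fin_cases i <;> fin_cases j <;> first
    | exact absurd hij (by decide) | assumption | exact lie_mem_span_pair_comm.1 h20

theorem lie_brackets_of_sl2_relations {x y z : L}
    (hxy : ⁅x, y⁆ = -z) (hyz : ⁅y, z⁆ = x) (hzx : ⁅z, x⁆ = y) :
    ⁅-x + y + z, x + y - z⁆ = (-x + y + z) - (x + y - z) ∧
    ⁅x + y - z, (2 : R) • x⁆ = (2 : R) • x - (2 : R) • (x + y - z) ∧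
    ⁅(2 : R) • x, -x + y + z⁆ = -(2 : R) • (-x + y + z) - (2 : R) • x := by
  have hyx : ⁅y, x⁆ = z := by rw [← lie_skew, hxy, neg_neg]
  have hzy : ⁅z, y⁆ = -x := by rw [← lie_skew, hyz]
  have hxz : ⁅x, z⁆ = -y := by rw [← lie_skew, hzx]
  refine ⟨?_, ?_, ?_⟩ <;>
  · simp only [add_lie, sub_lie, neg_lie, smul_lie, lie_add, lie_sub, lie_neg, lie_smul,
      lie_self, hxy, hyz, hzx, hyx, hzy, hxz]
    module

end

/-- In the real Lie algebra `a_{3,4} ≅ sl(2,ℝ)` with brackets `[η₁,η₂] = -η₃`,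
`[η₂,η₃] = η₁`, `[η₃,η₁] = η₂`, the vectors `ζ₁ = -η₁+η₂+η₃`, `ζ₂ = η₁+η₂-η₃`,
`ζ₃ = 2η₁` form a basis which is a Nijenhuis eigenbasis. -/
theorem a34_nijenhuis_eigenbasis
    {g : Type*} [LieRing g] [LieAlgebra ℝ g]
    (η : Module.Basis (Fin 3) ℝ g)
    (h12 : ⁅η 0, η 1⁆ = -η 2) (h23 : ⁅η 1, η 2⁆ = η 0) (h31 : ⁅η 2, η 0⁆ = η 1) :
    ∀ ζ : Fin 3 → g,
      ζ = ![-η 0 + η 1 + η 2, η 0 + η 1 - η 2, (2 : ℝ) • η 0] →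
      LinearIndependent ℝ ζ ∧ Submodule.span ℝ (Set.range ζ) = ⊤ ∧
      ⁅ζ 0, ζ 1⁆ = ζ 0 - ζ 1 ∧
      ⁅ζ 1, ζ 2⁆ = ζ 2 - (2 : ℝ) • ζ 1 ∧
      ⁅ζ 2, ζ 0⁆ = -(2 : ℝ) • ζ 0 - ζ 2 ∧
      ∀ i j : Fin 3, ⁅ζ i, ζ j⁆ ∈ Submodule.span ℝ ({ζ i, ζ j} : Set g) := by
  intro ζ hζ
  have hdet : η.det ζ = -4 := by
    simp [hζ, Module.Basis.det_apply, Matrix.det_fin_three, Module.Basis.toMatrix_apply]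
    norm_num
  have hbasis : LinearIndependent ℝ ζ ∧ span ℝ (Set.range ζ) = ⊤ :=
    η.is_basis_iff_det.2 (by rw [hdet]; norm_num)
  subst hζ
  obtain ⟨b01, b12, b20⟩ := lie_brackets_of_sl2_relations (R := ℝ) h12 h23 h31
  refine ⟨hbasis.1, hbasis.2, b01, b12, b20,
    forall_lie_mem_span_pair_fin_three ?_ ?_ ?_⟩
  · exact mem_span_pair.2 ⟨1, -1, by simp only [Matrix.cons_val, b01]; module⟩
  · exact mem_span_pair.2 ⟨-2, 1, by simp only [Matrix.cons_val, b12]; module⟩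
  · exact mem_span_pair.2 ⟨-1, -2, by simp only [Matrix.cons_val, b20]; module⟩
end

section
/- Let g be the 3-dimensional real Lie algebra with basis η₁,η₂,η₃ and nonzero brackets [η₁,η₂] = η₂, [η₃,η₁] = -η₃ (the algebra a_{3,5}). Then for any two vectors α, β ∈ g, the bracket [α,β] lies in the span of α and β; consequently every basis of g is a Nijenhuis eigenbasis. -/
/-! The bracket of `a_{3,5}` is `⁅x, y⁆ = φ x • y - φ y • x` for the coordinate functional
`φ = η.coord 0`: both sides are bilinear and they agree on pairs of basis vectors. A bracket of
this shape visibly lies in the span of its two arguments. -/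

section BracketOfFunctional

variable {R L : Type*} [CommRing R] [LieRing L] [LieAlgebra R L]

theorem lie_mem_span_pair_of_forall_lie_eq (φ : L →ₗ[R] R)
    (hφ : ∀ x y : L, ⁅x, y⁆ = φ x • y - φ y • x) (x y : L) :
    ⁅x, y⁆ ∈ Submodule.span R ({x, y} : Set L) := by
  rw [hφ]
  exact sub_mem (Submodule.smul_mem _ _ (Submodule.subset_span (by simp)))
    (Submodule.smul_mem _ _ (Submodule.subset_span (by simp)))

theorem forall_lie_eq_of_basis {ι : Type*} (b : Module.Basis ι R L) (φ : L →ₗ[R] R)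
    (hb : ∀ i j, ⁅b i, b j⁆ = φ (b i) • b j - φ (b j) • b i) (x y : L) :
    ⁅x, y⁆ = φ x • y - φ y • x := by
  let bracket : L →ₗ[R] L →ₗ[R] L :=
    LinearMap.mk₂ R (fun x y => ⁅x, y⁆) add_lie smul_lie lie_add lie_smul
  let wedge : L →ₗ[R] L →ₗ[R] L :=
    LinearMap.mk₂ R (fun x y => φ x • y - φ y • x)
      (fun _ _ _ => by simp only [map_add, add_smul, smul_add]; abel)
      (fun _ _ _ => by simp only [map_smul, smul_eq_mul, mul_smul, smul_sub, smul_comm _ (φ _)])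
      (fun _ _ _ => by simp only [map_add, add_smul, smul_add]; abel)
      (fun _ _ _ => by simp only [map_smul, smul_eq_mul, mul_smul, smul_sub, smul_comm _ (φ _)])
  exact LinearMap.congr_fun₂ (LinearMap.ext_basis b b hb : bracket = wedge) x y

end BracketOfFunctional

/-- In the real Lie algebra `a_{3,5}` with brackets `[η₁,η₂] = η₂`, `[η₂,η₃] = 0`,
`[η₃,η₁] = -η₃`, the bracket of any two vectors lies in their span; consequently every
basis is a Nijenhuis eigenbasis. -/
theorem a35_every_basis_nijenhuis
    {g : Type*} [LieRing g] [LieAlgebra ℝ g]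
    (η : Module.Basis (Fin 3) ℝ g)
    (h12 : ⁅η 0, η 1⁆ = η 1) (h23 : ⁅η 1, η 2⁆ = 0) (h31 : ⁅η 2, η 0⁆ = -η 2) :
    (∀ α β : g, ⁅α, β⁆ ∈ Submodule.span ℝ ({α, β} : Set g)) ∧
    ∀ ζ : Module.Basis (Fin 3) ℝ g, ∀ i j : Fin 3,
      ⁅ζ i, ζ j⁆ ∈ Submodule.span ℝ ({ζ i, ζ j} : Set g) := by
  have h10 : ⁅η 1, η 0⁆ = -η 1 := by rw [← lie_skew, h12]
  have h21 : ⁅η 2, η 1⁆ = 0 := by rw [← lie_skew, h23, neg_zero]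
  have h02 : ⁅η 0, η 2⁆ = η 2 := by rw [← lie_skew, h31, neg_neg]
  have hη : ∀ i j, ⁅η i, η j⁆ = η.coord 0 (η i) • η j - η.coord 0 (η j) • η i := by
    intro i j
    fin_cases i <;> fin_cases j <;> simp [Module.Basis.coord_apply, *]
  have hspan := lie_mem_span_pair_of_forall_lie_eq _ (forall_lie_eq_of_basis η _ hη)
  exact ⟨hspan, fun ζ i j => hspan (ζ i) (ζ j)⟩
end

section
/- Let b ∈ ℝ and let g be the 3-dimensional real Lie algebra with basis η₁,η₂,η₃ and brackets [η₁,η₂] = b·η₂ - η₃, [η₃,η₁] = η₂ - b·η₃, [η₂,η₃] = 0 (the algebra a_{3,8}). Then the vectors ζ₁ = η₁+η₃, ζ₂ = η₁+η₂, ζ₃ = η₂+η₃ form a basis with [ζ₁,ζ₂] = (1+b)(ζ₂-ζ₁), [ζ₂,ζ₃] = (b-1)ζ₃, [ζ₃,ζ₁] = (1-b)ζ₃, so each pair of these vectors spans a two-dimensional subalgebra. -/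
/-!
Everything is a direct computation. Bilinearity and antisymmetry expand each bracket of the
`ζ`'s into the three structure relations. The `ζ`'s span because each `2 • ηᵢ` is `±ζ₀ ± ζ₁ ± ζ₂`
(e.g. `2 • η₀ = ζ₀ + ζ₁ - ζ₂`), so three spanning vectors in dimension three are independent.
-/

namespace A38

-- `ζ₀ = x + z`, `ζ₁ = x + y`, `ζ₂ = y + z`, i.e. `ζ 0`, `ζ 1`, `ζ 2` for `(x, y, z) = (η 0, η 1, η 2)`.

variable {R L : Type*} [CommRing R] [LieRing L] [LieAlgebra R L] {b : R} {x y z : L}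

theorem lie_ζ₀_ζ₁ (hxy : ⁅x, y⁆ = b • y - z) (hzx : ⁅z, x⁆ = y - b • z)
    (hyz : ⁅y, z⁆ = 0) : ⁅x + z, x + y⁆ = (1 + b) • ((x + y) - (x + z)) := by
  have hzy : ⁅z, y⁆ = 0 := by rw [← lie_skew, hyz, neg_zero]
  simp only [lie_add, add_lie, hxy, hzx, hzy, lie_self]
  module

theorem lie_ζ₁_ζ₂ (hxy : ⁅x, y⁆ = b • y - z) (hzx : ⁅z, x⁆ = y - b • z)
    (hyz : ⁅y, z⁆ = 0) : ⁅x + y, y + z⁆ = (b - 1) • (y + z) := by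
  have hxz : ⁅x, z⁆ = -(y - b • z) := by rw [← lie_skew, hzx]
  simp only [lie_add, add_lie, hxy, hxz, hyz, lie_self]
  module

theorem lie_ζ₂_ζ₀ (hxy : ⁅x, y⁆ = b • y - z) (hzx : ⁅z, x⁆ = y - b • z)
    (hyz : ⁅y, z⁆ = 0) : ⁅y + z, x + z⁆ = (1 - b) • (y + z) := by
  have hyx : ⁅y, x⁆ = -(b • y - z) := by rw [← lie_skew, hxy]
  simp only [lie_add, add_lie, hyx, hzx, hyz, lie_self]
  module

end A38

section PairwiseSums

variable {K V : Type*} [Field K] [NeZero (2 : K)] [AddCommGroup V] [Module K V]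

theorem Module.Basis.span_pairwise_sums_fin_three (η : Module.Basis (Fin 3) K V) :
    Submodule.span K (Set.range ![η 0 + η 2, η 0 + η 1, η 1 + η 2]) = ⊤ := by
  set S := Submodule.span K (Set.range ![η 0 + η 2, η 0 + η 1, η 1 + η 2])
  have h₀ : η 0 + η 2 ∈ S := Submodule.subset_span ⟨0, rfl⟩
  have h₁ : η 0 + η 1 ∈ S := Submodule.subset_span ⟨1, rfl⟩
  have h₂ : η 1 + η 2 ∈ S := Submodule.subset_span ⟨2, rfl⟩
  rw [eq_top_iff, ← η.span_eq, Submodule.span_le]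
  rintro _ ⟨i, rfl⟩
  rw [SetLike.mem_coe, ← Submodule.smul_mem_iff S (two_ne_zero : (2 : K) ≠ 0)]
  fin_cases i <;> simp only [Fin.zero_eta, Fin.mk_one, Fin.reduceFinMk]
  · convert S.sub_mem (S.add_mem h₀ h₁) h₂ using 1; module
  · convert S.sub_mem (S.add_mem h₁ h₂) h₀ using 1; module
  · convert S.sub_mem (S.add_mem h₀ h₂) h₁ using 1; module

theorem Module.Basis.linearIndependent_pairwise_sums_fin_three (η : Module.Basis (Fin 3) K V) :
    LinearIndependent K ![η 0 + η 2, η 0 + η 1, η 1 + η 2] :=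
  linearIndependent_of_top_le_span_of_card_eq_finrank η.span_pairwise_sums_fin_three.ge
    (Module.finrank_eq_card_basis η).symm

end PairwiseSums

theorem lie_mem_span_pair_of_fin_three {R L : Type*} [CommRing R] [LieRing L] [LieAlgebra R L]
    (ζ : Fin 3 → L) (h₀₁ : ⁅ζ 0, ζ 1⁆ ∈ Submodule.span R {ζ 0, ζ 1})
    (h₁₂ : ⁅ζ 1, ζ 2⁆ ∈ Submodule.span R {ζ 1, ζ 2})
    (h₂₀ : ⁅ζ 2, ζ 0⁆ ∈ Submodule.span R {ζ 2, ζ 0}) (i j : Fin 3) :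
    ⁅ζ i, ζ j⁆ ∈ Submodule.span R {ζ i, ζ j} := by
  have swap : ∀ i j, ⁅ζ i, ζ j⁆ ∈ Submodule.span R {ζ i, ζ j} →
      ⁅ζ j, ζ i⁆ ∈ Submodule.span R {ζ j, ζ i} := by
    intro i j h
    rw [← lie_skew, Set.pair_comm]
    exact neg_mem h
  fin_cases i <;> fin_cases j <;> simp only [Fin.zero_eta, Fin.mk_one, Fin.reduceFinMk, lie_self,
    zero_mem] <;> first | assumption | exact swap _ _ ‹_›

/-- In the real Lie algebra `a_{3,8}` with brackets `[η₁,η₂] = b·η₂ - η₃`,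
`[η₃,η₁] = η₂ - b·η₃`, `[η₂,η₃] = 0`, the vectors `ζ₁ = η₁+η₃`, `ζ₂ = η₁+η₂`,
`ζ₃ = η₂+η₃` form a Nijenhuis eigenbasis. -/
theorem a38_nijenhuis_eigenbasis
    {g : Type*} [LieRing g] [LieAlgebra ℝ g] (b : ℝ)
    (η : Module.Basis (Fin 3) ℝ g)
    (h12 : ⁅η 0, η 1⁆ = b • η 1 - η 2) (h31 : ⁅η 2, η 0⁆ = η 1 - b • η 2)
    (h23 : ⁅η 1, η 2⁆ = 0) :
    ∀ ζ : Fin 3 → g,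
      ζ = ![η 0 + η 2, η 0 + η 1, η 1 + η 2] →
      LinearIndependent ℝ ζ ∧ Submodule.span ℝ (Set.range ζ) = ⊤ ∧
      ⁅ζ 0, ζ 1⁆ = (1 + b) • (ζ 1 - ζ 0) ∧
      ⁅ζ 1, ζ 2⁆ = (b - 1) • ζ 2 ∧
      ⁅ζ 2, ζ 0⁆ = (1 - b) • ζ 2 ∧
      ∀ i j : Fin 3, ⁅ζ i, ζ j⁆ ∈ Submodule.span ℝ ({ζ i, ζ j} : Set g) := by
  intro ζ hζ
  have h₀₁ : ⁅ζ 0, ζ 1⁆ = (1 + b) • (ζ 1 - ζ 0) := by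
    subst hζ; exact A38.lie_ζ₀_ζ₁ h12 h31 h23
  have h₁₂ : ⁅ζ 1, ζ 2⁆ = (b - 1) • ζ 2 := by
    subst hζ; exact A38.lie_ζ₁_ζ₂ h12 h31 h23
  have h₂₀ : ⁅ζ 2, ζ 0⁆ = (1 - b) • ζ 2 := by
    subst hζ; exact A38.lie_ζ₂_ζ₀ h12 h31 h23
  subst hζ
  refine ⟨η.linearIndependent_pairwise_sums_fin_three, η.span_pairwise_sums_fin_three,
    h₀₁, h₁₂, h₂₀, lie_mem_span_pair_of_fin_three _ ?_ ?_ ?_⟩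
  · rw [h₀₁]
    exact Submodule.smul_mem _ _ (Submodule.sub_mem _ (Submodule.subset_span (by simp))
      (Submodule.subset_span (by simp)))
  · rw [h₁₂]
    exact Submodule.smul_mem _ _ (Submodule.subset_span (by simp))
  · rw [h₂₀]
    exact Submodule.smul_mem _ _ (Submodule.subset_span (by simp))
end

section
/- The 3-dimensional Heisenberg Lie algebra over ℝ (basis η₁,η₂,η₃ with the single nonzero bracket [η₂,η₃] = η₁) does not admit a basis ζ₁,ζ₂,ζ₃ in which every pair of basis vectors spans a two-dimensional Lie subalgebra. Equivalently, it admits no regular semisimple algebraic Nijenhuis operator. -/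
/-!
The Heisenberg algebra is 2-step nilpotent: every bracket is central. If `⁅x, y⁆ = a • x + b • y`,
bracketing with `y` and with `x` gives `a • ⁅x, y⁆ = 0` and `b • ⁅x, y⁆ = 0`, so `⁅x, y⁆ = 0`.
Hence in a Nijenhuis eigenbasis all basis vectors would commute and the algebra would be abelian.

For a Nijenhuis operator `N` with `N x = λ • x` and `N y = μ • y`, the Nijenhuis identity reads
`(N - λ)(N - μ) ⁅x, y⁆ = 0`; when `N` is diagonal in a basis with distinct eigenvalues this forces
`⁅x, y⁆ ∈ span {x, y}`, so such an eigenbasis is a Nijenhuis eigenbasis.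
-/

open Submodule

section NijenhuisEigenbasis

variable {R K L ι : Type*}

def IsNijenhuisEigenbasis [CommRing R] [LieRing L] [LieAlgebra R L] (ζ : Module.Basis ι R L) :
    Prop :=
  ∀ i j, ⁅ζ i, ζ j⁆ ∈ span R ({ζ i, ζ j} : Set L)

def IsNijenhuisOperator [CommRing R] [LieRing L] [LieAlgebra R L] (N : Module.End R L) : Prop :=
  ∀ x y : L, N ⁅N x, y⁆ + N ⁅x, N y⁆ - ⁅N x, N y⁆ - N (N ⁅x, y⁆) = 0

section Bilinear

variable [CommRing R] [LieRing L] [LieAlgebra R L] (b : Module.Basis ι R L)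

theorem lie_eq_zero_of_lie_basis_eq_zero (h : ∀ i j, ⁅b i, b j⁆ = 0) (x y : L) : ⁅x, y⁆ = 0 := by
  have : (LieModule.toEnd R L L : L →ₗ[R] Module.End R L) = 0 :=
    LinearMap.ext_basis b b fun i j => by simpa using h i j
  simpa using LinearMap.congr_fun₂ this x y

theorem lie_lie_eq_zero_of_lie_lie_basis_eq_zero (h : ∀ i j (z : L), ⁅z, ⁅b i, b j⁆⁆ = 0)
    (x y z : L) : ⁅z, ⁅x, y⁆⁆ = 0 := by
  have : (LieModule.toEnd R L L : L →ₗ[R] Module.End R L).compr₂ (LieModule.toEnd R L L z) = 0 :=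
    LinearMap.ext_basis b b fun i j => by simpa using h i j z
  simpa using LinearMap.congr_fun₂ this x y

end Bilinear

section TwoStepNilpotent

variable [Field K] [LieRing L] [LieAlgebra K L]

theorem lie_eq_zero_of_mem_span_pair {x y : L} (hx : ⁅x, ⁅x, y⁆⁆ = 0) (hy : ⁅y, ⁅x, y⁆⁆ = 0)
    (hmem : ⁅x, y⁆ ∈ span K ({x, y} : Set L)) : ⁅x, y⁆ = 0 := by
  obtain ⟨a, b, hab⟩ := mem_span_pair.mp hmem
  have ha : a • ⁅x, y⁆ = 0 := by
    rwa [← hab, lie_add, lie_smul, lie_smul, lie_self, smul_zero, add_zero, ← lie_skew, smul_neg,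
      neg_eq_zero] at hy
  have hb : b • ⁅x, y⁆ = 0 := by
    rwa [← hab, lie_add, lie_smul, lie_smul, lie_self, smul_zero, zero_add] at hx
  by_contra hne
  rw [(smul_eq_zero.mp ha).resolve_right hne, (smul_eq_zero.mp hb).resolve_right hne, zero_smul,
    zero_smul, add_zero] at hab
  exact hne hab.symm

theorem not_isNijenhuisEigenbasis_of_lie_lie_eq_zero (h2 : ∀ x y z : L, ⁅z, ⁅x, y⁆⁆ = 0)
    {x y : L} (hxy : ⁅x, y⁆ ≠ 0) (ζ : Module.Basis ι K L) : ¬ IsNijenhuisEigenbasis ζ :=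
  fun hζ => hxy <| lie_eq_zero_of_lie_basis_eq_zero ζ
    (fun i j => lie_eq_zero_of_mem_span_pair (h2 _ _ _) (h2 _ _ _) (hζ i j)) x y

end TwoStepNilpotent

section Eigenbasis

variable [Field K] [AddCommGroup L] [Module K L] {N : Module.End K L} (b : Module.Basis ι K L)
  {ev : ι → K}

theorem Module.Basis.repr_apply_of_apply_eq_smul (heig : ∀ i, N (b i) = ev i • b i) (v : L)
    (k : ι) : b.repr (N v) k = ev k * b.repr v k := by
  have : Finsupp.lapply k ∘ₗ b.repr.toLinearMap ∘ₗ N = ev k • (Finsupp.lapply k ∘ₗ b.repr) :=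
    b.ext fun i => by by_cases hik : i = k <;> simp [heig, hik]
  exact LinearMap.congr_fun this v

theorem Module.Basis.mem_span_pair_of_apply_eq_smul (heig : ∀ i, N (b i) = ev i • b i)
    (hinj : Function.Injective ev) {i j : ι} {w : L}
    (hw : (N - ev i • 1) ((N - ev j • 1) w) = 0) : w ∈ span K ({b i, b j} : Set L) := by
  have hshift : ∀ a : K, ∀ k, (N - a • 1) (b k) = (ev k - a) • b k := fun a k => by
    simp [heig, sub_smul]
  rw [← Set.image_pair, b.mem_span_image]
  intro k hk
  have hwk := congrArg (b.repr · k) hw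
  simp only [b.repr_apply_of_apply_eq_smul (hshift _), map_zero, Finsupp.coe_zero,
    Pi.zero_apply, mul_eq_zero, sub_eq_zero] at hwk
  rcases hwk with h | h | h
  · exact .inl (hinj h)
  · exact .inr (hinj h)
  · exact absurd h (Finsupp.mem_support_iff.mp hk)

end Eigenbasis

namespace IsNijenhuisOperator

variable [Field K] [LieRing L] [LieAlgebra K L] {N : Module.End K L}

theorem sub_smul_one_apply_sub_smul_one_apply_lie (hN : IsNijenhuisOperator N) {x y : L}
    {a c : K} (hx : N x = a • x) (hy : N y = c • y) : (N - a • 1) ((N - c • 1) ⁅x, y⁆) = 0 := by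
  have hxy := hN x y
  rw [hx, hy] at hxy
  simp only [LinearMap.sub_apply, LinearMap.smul_apply, Module.End.one_apply, map_sub, map_smul,
    smul_lie, lie_smul] at hxy ⊢
  linear_combination (norm := module) -hxy

theorem isNijenhuisEigenbasis (hN : IsNijenhuisOperator N) (b : Module.Basis ι K L) {ev : ι → K}
    (hinj : Function.Injective ev) (heig : ∀ i, N (b i) = ev i • b i) :
    IsNijenhuisEigenbasis b := fun i j =>
  b.mem_span_pair_of_apply_eq_smul heig hinj
    (hN.sub_smul_one_apply_sub_smul_one_apply_lie (heig i) (heig j))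

end IsNijenhuisOperator

theorem heisenberg_lie_lie_eq_zero [LieRing L] [LieAlgebra ℝ L] (η : Module.Basis (Fin 3) ℝ L)
    (h23 : ⁅η 1, η 2⁆ = η 0) (h12 : ⁅η 0, η 1⁆ = 0) (h31 : ⁅η 2, η 0⁆ = 0) (x y z : L) :
    ⁅z, ⁅x, y⁆⁆ = 0 := by
  have h32 : ⁅η 2, η 1⁆ = -η 0 := by rw [← lie_skew, h23]
  have h02 : ⁅η 0, η 2⁆ = 0 := by rw [← lie_skew, h31, neg_zero]
  have hcentral : ∀ z : L, ⁅z, η 0⁆ = 0 := by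
    have : LieModule.toEnd ℝ L L (η 0) = 0 := η.ext fun i => by fin_cases i <;> simp [h12, h02]
    intro z
    rw [← lie_skew, neg_eq_zero]
    simpa using LinearMap.congr_fun this z
  refine lie_lie_eq_zero_of_lie_lie_basis_eq_zero η (fun i j z => ?_) x y z
  fin_cases i <;> fin_cases j <;> simp [hcentral, h23, h32, h12, h02]

end NijenhuisEigenbasis

/-- The 3-dimensional real Heisenberg Lie algebra admits no Nijenhuis eigenbasis,
equivalently no regular semisimple algebraic Nijenhuis operator. -/
theorem heisenberg_no_nijenhuis_eigenbasis
    {g : Type*} [LieRing g] [LieAlgebra ℝ g]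
    (η : Module.Basis (Fin 3) ℝ g)
    (h23 : ⁅η 1, η 2⁆ = η 0) (h12 : ⁅η 0, η 1⁆ = 0) (h31 : ⁅η 2, η 0⁆ = 0) :
    (¬ ∃ ζ : Module.Basis (Fin 3) ℝ g, ∀ i j : Fin 3,
        ⁅ζ i, ζ j⁆ ∈ Submodule.span ℝ ({ζ i, ζ j} : Set g)) ∧
    (¬ ∃ L : Module.End ℝ g,
        (∀ x y : g, L ⁅L x, y⁆ + L ⁅x, L y⁆ - ⁅L x, L y⁆ - L (L ⁅x, y⁆) = 0) ∧
        ∃ (b : Module.Basis (Fin 3) ℝ g) (ev : Fin 3 → ℝ), Function.Injective ev ∧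
          ∀ i, L (b i) = ev i • b i) := by
  have hnone (ζ : Module.Basis (Fin 3) ℝ g) : ¬ IsNijenhuisEigenbasis ζ :=
    not_isNijenhuisEigenbasis_of_lie_lie_eq_zero (heisenberg_lie_lie_eq_zero η h23 h12 h31)
      (h23 ▸ η.ne_zero 0) ζ
  refine ⟨fun ⟨ζ, hζ⟩ => hnone ζ hζ, ?_⟩
  rintro ⟨N, hN, b, ev, hinj, heig⟩
  exact hnone b (IsNijenhuisOperator.isNijenhuisEigenbasis hN b hinj heig)
end

section
/- The Lie algebra so(3,ℝ) (basis η₁,η₂,η₃ with [η₁,η₂]=η₃, [η₂,η₃]=η₁, [η₃,η₁]=η₂) does not admit a basis in which every pair of basis vectors spans a two-dimensional Lie subalgebra. -/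
/-!
In the coordinates of `η` the bracket is the cross product. The cross product of two vectors
is orthogonal to both, so if it lies in their span it is orthogonal to itself and hence zero.
Thus a basis of the required kind would consist of pairwise commuting vectors, forcing the
bracket to vanish identically, whereas `⁅η 0, η 1⁆ = η 2 ≠ 0`.
-/

open Matrix

theorem cross_eq_zero_of_mem_span_pair {R : Type*} [CommRing R] [LinearOrder R]
    [IsStrictOrderedRing R] {v w : Fin 3 → R} (h : v ⨯₃ w ∈ Submodule.span R {v, w}) :
    v ⨯₃ w = 0 := by
  obtain ⟨a, b, hab⟩ := Submodule.mem_span_pair.mp h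
  rw [← dotProduct_self_eq_zero]
  calc v ⨯₃ w ⬝ᵥ v ⨯₃ w = (a • v + b • w) ⬝ᵥ v ⨯₃ w := by rw [hab]
    _ = 0 := by simp only [add_dotProduct, smul_dotProduct, dot_self_cross, dot_cross_self,
      smul_zero, add_zero]

theorem Module.Basis.equivFun_lie_eq_cross {R L : Type*} [CommRing R] [LieRing L]
    [LieAlgebra R L] (η : Module.Basis (Fin 3) R L)
    (h12 : ⁅η 0, η 1⁆ = η 2) (h23 : ⁅η 1, η 2⁆ = η 0) (h31 : ⁅η 2, η 0⁆ = η 1) (x y : L) :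
    η.equivFun ⁅x, y⁆ = η.equivFun x ⨯₃ η.equivFun y := by
  suffices (LieModule.toEnd R L L : L →ₗ[R] Module.End R L).compr₂ η.equivFun.toLinearMap =
      crossProduct.compl₁₂ η.equivFun.toLinearMap η.equivFun.toLinearMap from
    LinearMap.congr_fun₂ this x y
  have h21 : ⁅η 1, η 0⁆ = -η 2 := by rw [← lie_skew, h12]
  have h32 : ⁅η 2, η 1⁆ = -η 0 := by rw [← lie_skew, h23]
  have h13 : ⁅η 0, η 2⁆ = -η 1 := by rw [← lie_skew, h31]
  refine LinearMap.ext_basis η η fun i j => funext fun k => ?_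
  fin_cases i <;> fin_cases j <;> fin_cases k <;>
    simp [h12, h23, h31, h21, h32, h13, cross_apply, Module.Basis.equivFun_self]

theorem isLieAbelian_of_basis_lie_eq_zero {R L ι : Type*} [CommRing R] [LieRing L]
    [LieAlgebra R L] (b : Module.Basis ι R L) (h : ∀ i j, ⁅b i, b j⁆ = 0) : IsLieAbelian L := by
  have : (LieModule.toEnd R L L : L →ₗ[R] Module.End R L) = 0 :=
    LinearMap.ext_basis b b fun i j => by simpa using h i j
  exact ⟨fun x y => by simpa using LinearMap.congr_fun₂ this x y⟩

/-- The Lie algebra `so(3,ℝ)` admits no basis in which every pair of basis vectors spans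
a two-dimensional Lie subalgebra. -/
theorem so3_no_nijenhuis_eigenbasis
    {g : Type*} [LieRing g] [LieAlgebra ℝ g]
    (η : Module.Basis (Fin 3) ℝ g)
    (h12 : ⁅η 0, η 1⁆ = η 2) (h23 : ⁅η 1, η 2⁆ = η 0) (h31 : ⁅η 2, η 0⁆ = η 1) :
    ¬ ∃ ζ : Module.Basis (Fin 3) ℝ g, ∀ i j : Fin 3,
      ⁅ζ i, ζ j⁆ ∈ Submodule.span ℝ ({ζ i, ζ j} : Set g) := by
  rintro ⟨ζ, hζ⟩
  have hcross := η.equivFun_lie_eq_cross h12 h23 h31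
  have hcomm : ∀ i j, ⁅ζ i, ζ j⁆ = 0 := fun i j => by
    have hspan := Submodule.mem_map_of_mem (f := η.equivFun.toLinearMap) (hζ i j)
    rw [Submodule.map_span, Set.image_pair] at hspan
    simp only [LinearEquiv.coe_coe, hcross] at hspan
    rw [← η.equivFun.map_eq_zero_iff, hcross]
    exact cross_eq_zero_of_mem_span_pair hspan
  have := isLieAbelian_of_basis_lie_eq_zero ζ hcomm
  exact η.ne_zero 2 (by rw [← h12, trivial_lie_zero])
end

section
/- Let g be a 3-dimensional Lie algebra over a field K with basis η₁,η₂,η₃ and structure constants cᵏᵢⱼ (so [ηᵢ,ηⱼ] = Σₖ cᵏᵢⱼ ηₖ). For linearly independent α = Σaⁱηᵢ and β = Σbⁱηᵢ set M₁ = a²b³-a³b², M₂ = a³b¹-a¹b³, M₃ = a¹b²-a²b¹. Then span{α,β} is a Lie subalgebra if and only if M₁²c¹₂₃ + M₂²c²₃₁ + M₃²c³₁₂ + M₁M₂(c¹₃₁+c²₂₃) + M₂M₃(c²₁₂+c³₃₁) + M₁M₃(c¹₁₂+c³₂₃) = 0. -/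
/-!
Let `M` be the cross product of the coordinate vectors of `α` and `β`. Since `α, β` are
independent, `M ≠ 0` and `span {α, β}` is exactly the plane `{z | coord z ⬝ M = 0}`: a vector lies
in it iff the determinant of its coordinates with those of `α` and `β` vanishes. In dimension
three the bracket factors through the cross product,
`⁅α, β⁆ = M₁ ⁅η₂, η₃⁆ + M₂ ⁅η₃, η₁⁆ + M₃ ⁅η₁, η₂⁆`, so the condition `coord ⁅α, β⁆ ⬝ M = 0` is
the stated quadratic form in `M`.
-/

open Module Submodule Matrix

theorem mem_span_pair_iff_dotProduct_cross_eq_zero {K : Type*} [Field K] {u v w : Fin 3 → K}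
    (huv : LinearIndependent K ![u, v]) :
    w ∈ span K {u, v} ↔ w ⬝ᵥ u ⨯₃ v = 0 := by
  have hli : LinearIndependent K ![w, u, v] ↔ w ∉ span K {u, v} := by
    rw [← range_cons_cons_empty u v ![]]
    exact linearIndependent_finCons.trans (and_iff_right huv)
  have hdet : LinearIndependent K ![w, u, v] ↔ det (of ![w, u, v]) ≠ 0 :=
    (linearIndependent_rows_iff_isUnit (A := of ![w, u, v])).trans
      ((isUnit_iff_isUnit_det _).trans isUnit_iff_ne_zero)
  rw [triple_product_eq_det, ← not_iff_not]
  exact hli.symm.trans hdet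

namespace Module.Basis

theorem mem_span_pair_iff_dotProduct_cross_eq_zero {K V : Type*} [Field K] [AddCommGroup V]
    [Module K V] (η : Basis (Fin 3) K V) {x y z : V} (hxy : LinearIndependent K ![x, y]) :
    z ∈ span K {x, y} ↔ η.equivFun z ⬝ᵥ η.equivFun x ⨯₃ η.equivFun y = 0 := by
  have hxy' : LinearIndependent K ![η.equivFun x, η.equivFun y] := by
    rw [LinearIndependent.pair_iff] at hxy ⊢
    intro s t hst
    exact hxy s t (η.equivFun.injective (by simpa using hst))
  rw [← _root_.mem_span_pair_iff_dotProduct_cross_eq_zero hxy', ← Set.image_pair]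
  exact (apply_mem_span_image_iff_mem_span (f := η.equivFun.toLinearMap) η.equivFun.injective).symm

theorem lie_eq_crossProduct_smul {R L : Type*} [CommRing R] [LieRing L] [LieAlgebra R L]
    (η : Basis (Fin 3) R L) (x y : L) :
    ⁅x, y⁆ = (η.equivFun x ⨯₃ η.equivFun y) 0 • ⁅η 1, η 2⁆
      + (η.equivFun x ⨯₃ η.equivFun y) 1 • ⁅η 2, η 0⁆
      + (η.equivFun x ⨯₃ η.equivFun y) 2 • ⁅η 0, η 1⁆ := by
  conv_lhs => rw [← η.sum_equivFun x, ← η.sum_equivFun y]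
  simp only [Fin.sum_univ_three, add_lie, lie_add, smul_lie, lie_smul, lie_self,
    ← lie_skew (η 1) (η 0), ← lie_skew (η 0) (η 2), ← lie_skew (η 2) (η 1), cross_apply,
    cons_val_zero, cons_val_one, cons_val_two, head_cons, tail_cons]
  module

end Module.Basis

/-- In a 3-dimensional Lie algebra with basis `η` and structure constants `c k i j`
(so `[ηᵢ,ηⱼ] = Σₖ c k i j • ηₖ`), for linearly independent `α, β` with cross product of
coordinates `M`, the span of `α, β` is a subalgebra iff the quadratic expression in `M`
given by the structure constants vanishes. -/
theorem subalgebra_iff_quadric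
    {K : Type*} [Field K] {g : Type*} [LieRing g] [LieAlgebra K g]
    (η : Module.Basis (Fin 3) K g) (c : Fin 3 → Fin 3 → Fin 3 → K)
    (hc : ∀ i j : Fin 3, ⁅η i, η j⁆ = ∑ k : Fin 3, c k i j • η k)
    (α β : g) (hind : LinearIndependent K ![α, β])
    (a b : Fin 3 → K) (ha : a = fun i => η.repr α i) (hb : b = fun i => η.repr β i)
    (M : Fin 3 → K)
    (hM : M = ![a 1 * b 2 - a 2 * b 1, a 2 * b 0 - a 0 * b 2, a 0 * b 1 - a 1 * b 0]) :
    ⁅α, β⁆ ∈ Submodule.span K ({α, β} : Set g) ↔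
      M 0 ^ 2 * c 0 1 2 + M 1 ^ 2 * c 1 2 0 + M 2 ^ 2 * c 2 0 1
        + M 0 * M 1 * (c 0 2 0 + c 1 1 2)
        + M 1 * M 2 * (c 1 0 1 + c 2 2 0)
        + M 0 * M 2 * (c 0 0 1 + c 2 1 2) = 0 := by
  have hM' : η.equivFun α ⨯₃ η.equivFun β = M := by
    rw [hM, ha, hb, cross_apply]
    rfl
  have hcoord : ∀ i j, η.equivFun ⁅η i, η j⁆ = fun k => c k i j := fun i j => by
    rw [hc, ← η.equivFun_symm_apply, LinearEquiv.apply_symm_apply]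
  rw [η.mem_span_pair_iff_dotProduct_cross_eq_zero hind, hM', η.lie_eq_crossProduct_smul, hM']
  simp only [map_add, map_smul, hcoord, dotProduct, Fin.sum_univ_three, Pi.add_apply,
    Pi.smul_apply, smul_eq_mul]
  exact Eq.congr_left (by ring)
end

section
/- Let a ∈ ℝ with a ≠ 0 and let g be the real Lie algebra with basis η₁,η₂,η₃ and brackets [η₁,η₂] = a·η₂ + η₃, [η₃,η₁] = η₂ - a·η₃, [η₂,η₃] = 0 (the algebra a_{3,7}). Then g does not admit a basis in which every pair of basis vectors spans a two-dimensional Lie subalgebra. -/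
/-!
If `⁅x, y⁆` lies in the span of `x` and `y`, its coordinate vector is orthogonal to the cross
product `N` of the coordinate vectors of `x` and `y`. In `a_{3,7}` that dot product is
`N₁² + N₂²`, so over `ℝ` both components vanish, and they determine `⁅x, y⁆`, which is then `0`.
A basis whose pairs span subalgebras would thus consist of commuting vectors, making the algebra
abelian, whereas `⁅η₀, η₁⁆ = a • η₁ + η₂ ≠ 0`.
-/

open Module Matrix

theorem repr_dotProduct_cross_eq_zero_of_mem_span_pair {R M : Type*} [CommRing R]
    [AddCommGroup M] [Module R M] (e : Basis (Fin 3) R M) {x y z : M}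
    (hz : z ∈ Submodule.span R {x, y}) :
    e.repr z ⬝ᵥ e.repr x ⨯₃ e.repr y = 0 := by
  obtain ⟨s, t, rfl⟩ := Submodule.mem_span_pair.1 hz
  simp [add_dotProduct, dot_self_cross, dot_cross_self]

theorem lie_eq_zero_of_forall_lie_basis_eq_zero {R L ι : Type*} [CommRing R] [LieRing L]
    [LieAlgebra R L] [Fintype ι] (b : Basis ι R L) (h : ∀ i j, ⁅b i, b j⁆ = 0) (x y : L) :
    ⁅x, y⁆ = 0 := by
  rw [← b.sum_repr x, ← b.sum_repr y]
  simp only [sum_lie, lie_sum, smul_lie, lie_smul, h, smul_zero, Finset.sum_const_zero]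

namespace A37

variable {K L : Type*} [CommRing K] [LieRing L] [LieAlgebra K L] {a : K} {η : Basis (Fin 3) K L}
    (h12 : ⁅η 0, η 1⁆ = a • η 1 + η 2) (h31 : ⁅η 2, η 0⁆ = η 1 - a • η 2)
    (h23 : ⁅η 1, η 2⁆ = 0)
include h12 h31 h23

theorem lie_eq (x y : L) :
    let N := η.repr x ⨯₃ η.repr y
    ⁅x, y⁆ = (a * N 2 + N 1) • η 1 + (N 2 - a * N 1) • η 2 := by
  intro N
  have h21 : ⁅η 1, η 0⁆ = -(a • η 1 + η 2) := by rw [← lie_skew, h12]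
  have h02 : ⁅η 0, η 2⁆ = -(η 1 - a • η 2) := by rw [← lie_skew, h31]
  have h32 : ⁅η 2, η 1⁆ = 0 := by rw [← lie_skew, h23, neg_zero]
  conv_lhs => rw [← η.sum_repr x, ← η.sum_repr y]
  simp only [Fin.sum_univ_three, add_lie, lie_add, smul_lie, lie_smul, lie_self, h12, h23, h21,
    h02, h31, h32, N, cross_apply, cons_val]
  module

theorem repr_lie_dotProduct_cross (x y : L) :
    let N := η.repr x ⨯₃ η.repr y
    η.repr ⁅x, y⁆ ⬝ᵥ N = N 1 ^ 2 + N 2 ^ 2 := by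
  intro N
  rw [lie_eq h12 h31 h23]
  simp only [dotProduct, Fin.sum_univ_three, map_add, map_smul, Basis.repr_self, Finsupp.coe_add,
    Finsupp.coe_smul, Pi.add_apply, Pi.smul_apply, Finsupp.single_apply, Fin.reduceEq, reduceIte,
    smul_eq_mul]
  ring

variable [LinearOrder K] [IsStrictOrderedRing K]

theorem lie_eq_zero_of_mem_span_pair {x y : L} (h : ⁅x, y⁆ ∈ Submodule.span K {x, y}) :
    ⁅x, y⁆ = 0 := by
  have hN := repr_lie_dotProduct_cross h12 h31 h23 x y
  dsimp only at hN
  rw [repr_dotProduct_cross_eq_zero_of_mem_span_pair η h, eq_comm] at hN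
  obtain ⟨hN1, hN2⟩ := (add_eq_zero_iff_of_nonneg (sq_nonneg _) (sq_nonneg _)).1 hN
  rw [lie_eq h12 h31 h23, pow_eq_zero_iff two_ne_zero |>.1 hN1,
    pow_eq_zero_iff two_ne_zero |>.1 hN2]
  simp

end A37

theorem a37_no_nijenhuis_eigenbasis_general
    {g : Type*} [LieRing g] [LieAlgebra ℝ g] (a : ℝ)
    (η : Module.Basis (Fin 3) ℝ g)
    (h12 : ⁅η 0, η 1⁆ = a • η 1 + η 2) (h31 : ⁅η 2, η 0⁆ = η 1 - a • η 2)
    (h23 : ⁅η 1, η 2⁆ = 0) :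
    ¬ ∃ ζ : Module.Basis (Fin 3) ℝ g, ∀ i j : Fin 3,
      ⁅ζ i, ζ j⁆ ∈ Submodule.span ℝ ({ζ i, ζ j} : Set g) := by
  rintro ⟨ζ, hζ⟩
  have h01 : ⁅η 0, η 1⁆ = 0 := lie_eq_zero_of_forall_lie_basis_eq_zero ζ
    (fun i j => A37.lie_eq_zero_of_mem_span_pair h12 h31 h23 (hζ i j)) _ _
  have h2 := congrArg (fun z => η.repr z 2) (h12.symm.trans h01)
  simp at h2

/-- For `a ≠ 0`, the real Lie algebra `a_{3,7}` with brackets `[η₁,η₂] = a·η₂ + η₃`,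
`[η₃,η₁] = η₂ - a·η₃`, `[η₂,η₃] = 0` admits no Nijenhuis eigenbasis. -/
theorem a37_no_nijenhuis_eigenbasis
    {g : Type*} [LieRing g] [LieAlgebra ℝ g] (a : ℝ) (ha : a ≠ 0)
    (η : Module.Basis (Fin 3) ℝ g)
    (h12 : ⁅η 0, η 1⁆ = a • η 1 + η 2) (h31 : ⁅η 2, η 0⁆ = η 1 - a • η 2)
    (h23 : ⁅η 1, η 2⁆ = 0) :
    ¬ ∃ ζ : Module.Basis (Fin 3) ℝ g, ∀ i j : Fin 3,
      ⁅ζ i, ζ j⁆ ∈ Submodule.span ℝ ({ζ i, ζ j} : Set g) :=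
  a37_no_nijenhuis_eigenbasis_general a η h12 h31 h23
end

section
/- The complex Heisenberg Lie algebra (basis η₁,η₂,η₃ with the single nonzero bracket [η₂,η₃] = η₁) does not admit a basis in which every pair of basis vectors spans a two-dimensional Lie subalgebra. -/
/-!
In the Heisenberg algebra every bracket is a multiple of the central vector `η 0`, so every
bracket is central. If `⁅x, y⁆ = a • x + b • y` is central, bracketing with `x` and with `y`
gives `b • ⁅x, y⁆ = 0` and `a • ⁅x, y⁆ = 0`, which forces `⁅x, y⁆ = 0`. Hence a basis whose
pairs span subalgebras would consist of commuting vectors, making the algebra abelian,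
whereas `⁅η 1, η 2⁆ = η 0 ≠ 0`.
-/

section

variable {R L : Type*} [CommRing R] [LieRing L] [LieAlgebra R L]

theorem lie_mem_of_forall_basis {ι : Type*} (b : Module.Basis ι R L) {S : Submodule R L}
    (h : ∀ i j, ⁅b i, b j⁆ ∈ S) (x y : L) : ⁅x, y⁆ ∈ S := by
  have hzero : (LieAlgebra.ad R L : L →ₗ[R] Module.End R L).compr₂ S.mkQ = 0 :=
    b.ext fun i => b.ext fun j => by simpa using h i j
  simpa using congr($hzero x y)

theorem lie_eq_zero_of_mem_span_pair_s17 [IsDomain R] [Module.IsTorsionFree R L] {x y : L}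
    (hx : ⁅⁅x, y⁆, x⁆ = 0) (hy : ⁅⁅x, y⁆, y⁆ = 0) (h : ⁅x, y⁆ ∈ Submodule.span R {x, y}) :
    ⁅x, y⁆ = 0 := by
  by_contra hne
  obtain ⟨a, b, hab⟩ := Submodule.mem_span_pair.mp h
  have ha : a = 0 := by
    rw [← hab, add_lie, smul_lie, smul_lie, lie_self, smul_zero, add_zero] at hy
    exact (smul_eq_zero_iff_left hne).mp hy
  have hb : b = 0 := by
    rw [← hab, add_lie, smul_lie, smul_lie, lie_self, smul_zero, zero_add, ← lie_skew,
      smul_neg, neg_eq_zero] at hx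
    exact (smul_eq_zero_iff_left hne).mp hx
  rw [ha, hb, zero_smul, zero_smul, add_zero] at hab
  exact hne hab.symm

theorem lie_lie_eq_zero_of_heisenberg (η : Module.Basis (Fin 3) R L)
    (h23 : ⁅η 1, η 2⁆ = η 0) (h12 : ⁅η 0, η 1⁆ = 0) (h31 : ⁅η 2, η 0⁆ = 0) (x y z : L) :
    ⁅⁅x, y⁆, z⁆ = 0 := by
  have h02 : ⁅η 0, η 2⁆ = 0 := by rw [← lie_skew, h31, neg_zero]
  have hcentral : LieAlgebra.ad R L (η 0) = 0 :=
    η.ext fun j => by fin_cases j <;> simp [h12, h02]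
  have hderived : ⁅x, y⁆ ∈ R ∙ η 0 := lie_mem_of_forall_basis η (fun i j => by
    fin_cases i <;> fin_cases j <;>
      simp [h23, h12, h31, ← lie_skew (η 2) (η 1), ← lie_skew (η 1) (η 0), h02,
        Submodule.mem_span_singleton_self]) x y
  obtain ⟨c, hc⟩ := Submodule.mem_span_singleton.mp hderived
  rw [← hc, smul_lie, ← LieAlgebra.ad_apply R, hcentral, LinearMap.zero_apply, smul_zero]

end

/-- The complex Heisenberg Lie algebra admits no basis in which every pair of basis
vectors spans a two-dimensional Lie subalgebra. -/
theorem heisenbergC_no_nijenhuis_eigenbasis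
    {g : Type*} [LieRing g] [LieAlgebra ℂ g]
    (η : Module.Basis (Fin 3) ℂ g)
    (h23 : ⁅η 1, η 2⁆ = η 0) (h12 : ⁅η 0, η 1⁆ = 0) (h31 : ⁅η 2, η 0⁆ = 0) :
    ¬ ∃ ζ : Module.Basis (Fin 3) ℂ g, ∀ i j : Fin 3,
      ⁅ζ i, ζ j⁆ ∈ Submodule.span ℂ ({ζ i, ζ j} : Set g) := by
  rintro ⟨ζ, hζ⟩
  have hcentral := lie_lie_eq_zero_of_heisenberg η h23 h12 h31
  have hζ_comm (i j : Fin 3) : ⁅ζ i, ζ j⁆ ∈ (⊥ : Submodule ℂ g) :=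
    lie_eq_zero_of_mem_span_pair_s17 (hcentral _ _ _) (hcentral _ _ _) (hζ i j)
  have habelian := lie_mem_of_forall_basis ζ hζ_comm (η 1) (η 2)
  rw [h23, Submodule.mem_bot] at habelian
  exact η.ne_zero 0 habelian
end
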